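/- arXiv:1412.7204 — 7 statements merged into one kernel-verified Lean document; each statement's English description precedes it below -/
import Mathlib

section
/- Let A be a vector space over ℚ, and let D, R be natural numbers with 2 ≤ D and D + 1 ≤ R. Suppose v : ℕ → A and w : ℕ → A satisfy, for every natural number m ≥ 1, v m = (C(m+R-1, R) + ∑_{i=2}^{D} (-1)^{i-1}·(i-1)·C(D, i)·C(m+R-1-i, R)) • v 1 + ∑_{i=2}^{D} (-1)^{i}·C(m+R-1-i, R-1) • w i, with all scalars taken in ℚ. Then for every m ≥ 1, v m lies in the ℚ-linear span of {v 1, v 2, …, v D}. -/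
/-!
For `2 ≤ i ≤ D`, the relation at `m = i` expresses `v i` through `v 1` and `w 2, …, w D`, where
`w i` enters with coefficient `(-1)^i C(R-1, R-1) = ±1` and every `w j` with `j > i` with
coefficient `C(i+R-1-j, R-1) = 0`. These relations therefore form a unitriangular system which,
solved by induction on `i`, puts every `w i` in the span of `v 1, …, v D`; the relation for a
general `m` then does the same for `v m`.
-/

namespace Submodule

variable {ι K A : Type*} [LinearOrder ι] [WellFoundedLT ι] [DivisionRing K] [AddCommGroup A]
  [Module K A]

theorem mem_of_triangular_sum_mem (S : Submodule K A) (s : Finset ι) (c : ι → ι → K) (w : ι → A)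
    (hdiag : ∀ i ∈ s, c i i ≠ 0) (hupper : ∀ i j, i < j → c i j = 0)
    (hsum : ∀ i ∈ s, ∑ j ∈ s, c i j • w j ∈ S) :
    ∀ i ∈ s, w i ∈ S := by
  intro i
  induction i using WellFoundedLT.induction with
  | _ i IH =>
    intro hi
    have hrest : ∑ j ∈ s.erase i, c i j • w j ∈ S := by
      refine S.sum_mem fun j hj => ?_
      obtain ⟨hji, hj⟩ := Finset.mem_erase.mp hj
      rcases hji.lt_or_gt with hlt | hgt
      · exact S.smul_mem _ (IH j hlt hj)
      · simp [hupper i j hgt]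
    have hdiag_mem : c i i • w i ∈ S := by
      have := hsum i hi
      rwa [← Finset.add_sum_erase s _ hi, S.add_mem_iff_left hrest] at this
    exact (S.smul_mem_iff (hdiag i hi)).mp hdiag_mem

end Submodule

/-- Theorem 3.1 (Equation MainEq), first assertion: under the displayed recursion,
`v m` lies in the span of `v 1, …, v D` for all `m ≥ 1`. -/
theorem stmt_0 {A : Type*} [AddCommGroup A] [Module ℚ A]
    (D R : ℕ) (hD : 2 ≤ D) (hR : D + 1 ≤ R)
    (v w : ℕ → A)
    (hv : ∀ m : ℕ, 1 ≤ m →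
      v m = (((m + R - 1).choose R : ℚ)
            + ∑ i ∈ Finset.Icc 2 D,
                (-1 : ℚ) ^ (i - 1) * ((i - 1 : ℕ) : ℚ) * (D.choose i : ℚ)
                  * ((m + R - 1 - i).choose R : ℚ)) • v 1
          + ∑ i ∈ Finset.Icc 2 D,
              ((-1 : ℚ) ^ i * ((m + R - 1 - i).choose (R - 1) : ℚ)) • w i) :
    ∀ m : ℕ, 1 ≤ m → v m ∈ Submodule.span ℚ (v '' Set.Icc 1 D) := by
  set S := Submodule.span ℚ (v '' Set.Icc 1 D)
  have hvS : ∀ k, 1 ≤ k → k ≤ D → v k ∈ S := fun k h1 h2 =>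
    Submodule.subset_span ⟨k, ⟨h1, h2⟩, rfl⟩
  have hv1 : ∀ a : ℚ, a • v 1 ∈ S := fun a => S.smul_mem a (hvS 1 le_rfl (by omega))
  have hw : ∀ i ∈ Finset.Icc 2 D, w i ∈ S := by
    refine S.mem_of_triangular_sum_mem _
      (fun i j => (-1 : ℚ) ^ j * ((i + R - 1 - j).choose (R - 1) : ℚ)) w
      (fun i _ => ?_) (fun i j hij => ?_) (fun i hi => ?_)
    · rw [show i + R - 1 - i = R - 1 by omega, Nat.choose_self]
      simp
    · rw [Nat.choose_eq_zero_of_lt (by omega : i + R - 1 - j < R - 1)]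
      simp
    · obtain ⟨hi2, hiD⟩ := Finset.mem_Icc.mp hi
      have := hvS i (by omega) hiD
      rwa [hv i (by omega), S.add_mem_iff_right (hv1 _)] at this
  intro m hm
  rw [hv m hm]
  exact S.add_mem (hv1 _) (S.sum_mem fun j hj => S.smul_mem _ (hw j hj))
end

section
/- For all natural numbers d ≥ 1, D ≥ 1 and m ≥ 0, setting N = D + d − 1, the following identity holds in ℤ: C(m+N, N) = D·C(m+d-1, d) + C(m+d-1, d-1) + ∑_{i=2}^{D} (-1)^{i}·(i-1)·C(D, i)·C(m+N-i, N). -/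
/-!
Since `(i - 1) * C(D, i) = D * C(D - 1, i - 1) - C(D, i)`, the sum splits into two alternating
sums `∑ (-1)^i C(A, i) C(y + A - i, N)`. Each is an `A`-fold forward difference of
`t ↦ C(t, N)`, hence equal to `C(y, N - A)`; they give `-D * C(m + d - 1, d)` and
`C(m + d - 1, d - 1)`, and the `i = 0` term supplies `C(m + N, N)`.
-/

open Finset

theorem sum_range_neg_one_pow_mul_choose_mul_choose_add_sub (A j y : ℕ) :
    ∑ i ∈ range (A + 1), (-1 : ℤ) ^ i * A.choose i * (y + A - i).choose (A + j) =
      y.choose j := by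
  have h := fwdDiff_iter_eq_sum_shift 1 (fun x ↦ x.choose (A + j) : ℕ → ℤ) A y
  rw [fwdDiff_iter_choose] at h
  beta_reduce at h
  rw [h, ← sum_range_reflect]
  refine sum_congr rfl fun i hi ↦ ?_
  have hiA : i ≤ A := Nat.lt_succ_iff.mp (mem_range.mp hi)
  rw [Nat.add_sub_cancel, Nat.choose_symm hiA, smul_eq_mul, smul_eq_mul, mul_one,
    show y + A - (A - i) = y + i by omega]

theorem sum_range_neg_one_pow_mul_mul_choose_mul_choose_add_sub (A j y : ℕ) :
    ∑ i ∈ range (A + 1), (-1 : ℤ) ^ i * i * A.choose i * (y + A - i).choose (A + j) =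
      -A * y.choose (j + 1) := by
  cases A with
  | zero => simp
  | succ B =>
    rw [sum_range_succ', ← sum_range_neg_one_pow_mul_choose_mul_choose_add_sub B (j + 1) y,
      mul_sum]
    simp only [CharP.cast_eq_zero, mul_zero, zero_mul, add_zero]
    refine sum_congr rfl fun i _ ↦ ?_
    have hchoose : ((i + 1 : ℕ) : ℤ) * (B + 1).choose (i + 1) = (B + 1 : ℕ) * B.choose i := by
      rw [mul_comm]
      exact_mod_cast (Nat.add_one_mul_choose_eq B i).symm
    rw [show y + (B + 1) - (i + 1) = y + B - i by omega, show B + 1 + j = B + (j + 1) by omega]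
    linear_combination (-(-1 : ℤ) ^ i * (y + B - i).choose (B + (j + 1))) * hchoose

theorem sum_Icc_two_neg_one_pow_mul_sub_one_mul_choose (D : ℕ) (g : ℕ → ℤ) :
    ∑ i ∈ Icc 2 D, (-1 : ℤ) ^ i * ((i - 1 : ℕ) : ℤ) * D.choose i * g i =
      ∑ i ∈ range (D + 1), (-1 : ℤ) ^ i * i * D.choose i * g i
        - ∑ i ∈ range (D + 1), (-1 : ℤ) ^ i * D.choose i * g i + g 0 := by
  have hsubset : Icc 2 D ⊆ range (D + 1) := fun i hi ↦ by
    simp only [mem_Icc, mem_range] at hi ⊢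
    omega
  have hvanish : ∀ i ∈ range (D + 1), i ∉ Icc 2 D →
      (-1 : ℤ) ^ i * ((i - 1 : ℕ) : ℤ) * D.choose i * g i = 0 := fun i hi hi' ↦ by
    simp only [mem_Icc, mem_range] at hi hi'
    simp [show i - 1 = 0 by omega]
  rw [sum_subset hsubset hvanish, ← sum_sub_distrib, sum_range_succ', sum_range_succ']
  push_cast [Nat.add_sub_cancel, Nat.choose_zero_right]
  simp only [zero_mul, add_zero, one_mul, zero_sub, neg_add_cancel_right]
  exact sum_congr rfl fun x _ ↦ by ring

theorem stmt_3_general (d D m N : ℕ) (hd : 1 ≤ d) (hN : N = D + d - 1) :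
    ((m + N).choose N : ℤ)
      = (D : ℤ) * ((m + d - 1).choose d : ℤ) + ((m + d - 1).choose (d - 1) : ℤ)
        + ∑ i ∈ Finset.Icc 2 D,
            (-1 : ℤ) ^ i * ((i - 1 : ℕ) : ℤ) * (D.choose i : ℤ)
              * ((m + N - i).choose N : ℤ) := by
  obtain ⟨e, rfl⟩ : ∃ e, d = e + 1 := ⟨d - 1, by omega⟩
  obtain rfl : N = D + e := by omega
  rw [Nat.add_succ_sub_one, Nat.add_sub_cancel, show m + (D + e) = m + e + D by ring,
    sum_Icc_two_neg_one_pow_mul_sub_one_mul_choose D fun i ↦ (m + e + D - i).choose (D + e),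
    sum_range_neg_one_pow_mul_mul_choose_mul_choose_add_sub,
    sum_range_neg_one_pow_mul_choose_mul_choose_add_sub, Nat.sub_zero]
  ring

/-- Numerical consistency between the two computations of `h⁰(X, L^⊗m)` for a variety
of minimal degree `D` and dimension `d` in `P^N`, `N = D + d - 1`. -/
theorem stmt_3 (d D m N : ℕ) (hd : 1 ≤ d) (hD : 1 ≤ D) (hN : N = D + d - 1) :
    ((m + N).choose N : ℤ)
      = (D : ℤ) * ((m + d - 1).choose d : ℤ) + ((m + d - 1).choose (d - 1) : ℤ)
        + ∑ i ∈ Finset.Icc 2 D,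
            (-1 : ℤ) ^ i * ((i - 1 : ℕ) : ℤ) * (D.choose i : ℤ)
              * ((m + N - i).choose N : ℤ) :=
  stmt_3_general d D m N hd hN
end

section
/- Let d ≥ 1 be a natural number, let a : Fin d → ℕ, and let m ∈ ℕ. Then the sum, over all tuples f : Fin d → ℕ with ∑_j f j = m, of (1 + ∑_j (f j)·(a j)) equals C(m+d-1, d-1) + (∑_j a j)·C(m+d-1, d). -/
/-!
Split the summand as `1 + ∑ j, f j * a j`. The constant part counts compositions, which
stars and bars identifies with `C(m + d - 1, d - 1)`. For the linear part, swapping two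
coordinates permutes the compositions, so every coordinate has the same total `∑_f f j`;
summing over `j` shows `d` times it is `m` times the number of compositions, which is
`d * C(m + d - 1, d)`.
-/

open Finset

namespace Finset.Nat

theorem card_antidiagonalTuple (d m : ℕ) :
    #(antidiagonalTuple d m) = (d + m - 1).choose m := by
  have card_sym := Sym.card_sym_eq_choose (α := Fin d) m
  rw [Fintype.card_fin, ← Nat.card_eq_fintype_card,
    Nat.card_congr (Sym.equivNatSumOfFintype (Fin d) m)] at card_sym
  rw [← card_sym, ← Nat.card_eq_finsetCard]
  exact Nat.card_congr (Equiv.subtypeEquivRight fun f => mem_antidiagonalTuple)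

theorem sum_apply_antidiagonalTuple_comm {d : ℕ} (m : ℕ) (i j : Fin d) :
    ∑ f ∈ antidiagonalTuple d m, f i = ∑ f ∈ antidiagonalTuple d m, f j := by
  have swap_mem :
      ∀ f ∈ antidiagonalTuple d m, f ∘ Equiv.swap i j ∈ antidiagonalTuple d m := by
    intro f hf
    rw [mem_antidiagonalTuple] at hf ⊢
    rw [← hf]
    exact Equiv.sum_comp (Equiv.swap i j) f
  refine sum_nbij' (· ∘ Equiv.swap i j) (· ∘ Equiv.swap i j) swap_mem swap_mem ?_ ?_ ?_ <;>
    intros <;> simp [Function.comp_def]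

theorem mul_sum_apply_antidiagonalTuple {d : ℕ} (m : ℕ) (j : Fin d) :
    d * ∑ f ∈ antidiagonalTuple d m, f j = m * #(antidiagonalTuple d m) := by
  calc d * ∑ f ∈ antidiagonalTuple d m, f j
      = ∑ i : Fin d, ∑ f ∈ antidiagonalTuple d m, f i := by
        simp [sum_apply_antidiagonalTuple_comm m _ j]
    _ = ∑ f ∈ antidiagonalTuple d m, ∑ i, f i := sum_comm
    _ = ∑ _f ∈ antidiagonalTuple d m, m := sum_congr rfl fun f hf => mem_antidiagonalTuple.mp hf
    _ = m * #(antidiagonalTuple d m) := by rw [sum_const, smul_eq_mul, mul_comm]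

theorem sum_apply_antidiagonalTuple {d : ℕ} (m : ℕ) (j : Fin d) :
    ∑ f ∈ antidiagonalTuple d m, f j = (m + d - 1).choose d := by
  obtain ⟨e, rfl⟩ : ∃ e, d = e + 1 := Nat.exists_eq_add_one_of_ne_zero j.pos.ne'
  have mul_sum_eq := mul_sum_apply_antidiagonalTuple m j
  rw [card_antidiagonalTuple, show e + 1 + m - 1 = m + e by omega,
    Nat.choose_symm_add] at mul_sum_eq
  have choose_succ := Nat.choose_succ_right_eq (m + e) e
  rw [Nat.add_sub_cancel] at choose_succ
  rw [show m + (e + 1) - 1 = m + e by omega]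
  apply Nat.eq_of_mul_eq_mul_left e.succ_pos
  rw [mul_sum_eq, mul_comm, ← choose_succ, mul_comm]

end Finset.Nat

/-- The rank-scaling formula for rational normal scrolls: `h⁰(S(a₁,…,a_d), 𝒪(m))`
computed as a sum over `d`-fold compositions of `m`. -/
theorem stmt_5 (d : ℕ) (hd : 1 ≤ d) (a : Fin d → ℕ) (m : ℕ) :
    ∑ f ∈ Finset.Nat.antidiagonalTuple d m, (1 + ∑ j, f j * a j)
      = (m + d - 1).choose (d - 1) + (∑ j, a j) * (m + d - 1).choose d := by
  have card_eq : #(Finset.Nat.antidiagonalTuple d m) = (m + d - 1).choose (d - 1) := by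
    rw [Finset.Nat.card_antidiagonalTuple, add_comm d]
    exact Nat.choose_symm_of_eq_add (by omega)
  rw [sum_add_distrib, ← card_eq_sum_ones, card_eq, sum_comm]
  simp only [← sum_mul, Finset.Nat.sum_apply_antidiagonalTuple]
  rw [← mul_sum, mul_comm]
end

section
/- Let A be a vector space over ℚ, and let v : ℕ → A and w₂, w₃ ∈ A satisfy, for every natural number m ≥ 1, v m = (C(m+4, 5) − 3·C(m+2, 5) + 2·C(m+1, 5)) • v 1 + C(m+2, 4) • w₂ − C(m+1, 4) • w₃, with scalars in ℚ. Then for every m ≥ 1, v m = (C(m+4, 5) − 6·C(m+2, 4) + 12·C(m+1, 4) − 3·C(m+2, 5) + 2·C(m+1, 5)) • v 1 + (C(m+2, 4) − 5·C(m+1, 4)) • v 2 + C(m+1, 4) • v 3. -/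
/-- Corollary (scrollexample): the `(S(1,2), 𝒪(1))` scaling Chern class identity. -/
theorem stmt_6 {A : Type*} [AddCommGroup A] [Module ℚ A]
    (v : ℕ → A) (w₂ w₃ : A)
    (hv : ∀ m : ℕ, 1 ≤ m →
      v m = (((m + 4).choose 5 : ℚ) - 3 * ((m + 2).choose 5 : ℚ)
              + 2 * ((m + 1).choose 5 : ℚ)) • v 1
          + ((m + 2).choose 4 : ℚ) • w₂ - ((m + 1).choose 4 : ℚ) • w₃) :
    ∀ m : ℕ, 1 ≤ m →
      v m = (((m + 4).choose 5 : ℚ) - 6 * ((m + 2).choose 4 : ℚ)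
              + 12 * ((m + 1).choose 4 : ℚ) - 3 * ((m + 2).choose 5 : ℚ)
              + 2 * ((m + 1).choose 5 : ℚ)) • v 1
          + (((m + 2).choose 4 : ℚ) - 5 * ((m + 1).choose 4 : ℚ)) • v 2
          + ((m + 1).choose 4 : ℚ) • v 3 := by
  intro m hm
  have h2 := hv 2 (by norm_num)
  have h3 := hv 3 (by norm_num)
  norm_num [Nat.choose] at h2 h3
  have hw2 : w₂ = v 2 - (6:ℚ) • v 1 := by
    rw [h2]; module
  have hw3 : w₃ = (-12:ℚ) • v 1 + (5:ℚ) • v 2 - v 3 := by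
    rw [h3, hw2]; module
  rw [hv m hm, hw2, hw3]
  module
end

section
/- Let A be a vector space over ℚ, and let v : ℕ → A and w₂, w₃ ∈ A satisfy, for every natural number m ≥ 1, v m = (C(m+3, 4) − 3·C(m+1, 4) + 2·C(m, 4)) • v 1 + C(m+1, 3) • w₂ − C(m, 3) • w₃, with scalars in ℚ. Then for every m ≥ 1, v m = (C(m+3, 4) − 5·C(m+1, 3) − 3·C(m+1, 4) + 8·C(m, 3) + 2·C(m, 4)) • v 1 + (C(m+1, 3) − 4·C(m, 3)) • v 2 + C(m, 3) • v 3. -/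
/-- Corollary (TwistedCubicCor): the `(P¹, 𝒪(3))` scaling Chern class identity. -/
theorem stmt_7 {A : Type*} [AddCommGroup A] [Module ℚ A]
    (v : ℕ → A) (w₂ w₃ : A)
    (hv : ∀ m : ℕ, 1 ≤ m →
      v m = (((m + 3).choose 4 : ℚ) - 3 * ((m + 1).choose 4 : ℚ)
              + 2 * (m.choose 4 : ℚ)) • v 1
          + ((m + 1).choose 3 : ℚ) • w₂ - (m.choose 3 : ℚ) • w₃) :
    ∀ m : ℕ, 1 ≤ m →
      v m = (((m + 3).choose 4 : ℚ) - 5 * ((m + 1).choose 3 : ℚ)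
              - 3 * ((m + 1).choose 4 : ℚ) + 8 * (m.choose 3 : ℚ)
              + 2 * (m.choose 4 : ℚ)) • v 1
          + (((m + 1).choose 3 : ℚ) - 4 * (m.choose 3 : ℚ)) • v 2
          + (m.choose 3 : ℚ) • v 3 := by
  have h2 := hv 2 (by norm_num)
  have h3 := hv 3 (by norm_num)
  norm_num [Nat.choose] at h2 h3
  have hw2 : w₂ = v 2 - (5 : ℚ) • v 1 := by
    rw [h2]; module
  have hw3 : w₃ = (-8 : ℚ) • v 1 + (4 : ℚ) • v 2 - v 3 := by
    rw [h3, hw2]; module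
  intro m hm
  rw [hv m hm, hw2, hw3]
  module
end

section
/- Let A be a vector space over ℚ, and let v : ℕ → A and w₂, w₃, w₄ ∈ A satisfy, for every natural number m ≥ 1, v m = (C(m+5, 6) − 6·C(m+3, 6) + 8·C(m+2, 6) − 3·C(m+1, 6)) • v 1 + C(m+3, 5) • w₂ − C(m+2, 5) • w₃ + C(m+1, 5) • w₄, with scalars in ℚ. Then for every m ≥ 1, v m = (−7·C(m+3, 5) + 20·C(m+2, 5) − 23·C(m+1, 5) − 6·C(m+3, 6) + 8·C(m+2, 6) − 3·C(m+1, 6) + C(m+5, 6)) • v 1 + (C(m+3, 5) − 6·C(m+2, 5) + 15·C(m+1, 5)) • v 2 + (C(m+2, 5) − 6·C(m+1, 5)) • v 3 + C(m+1, 5) • v 4. -/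
/-- Corollary (P2O2): the Veronese surface scaling Chern class identity. -/
theorem stmt_8 {A : Type*} [AddCommGroup A] [Module ℚ A]
    (v : ℕ → A) (w₂ w₃ w₄ : A)
    (hv : ∀ m : ℕ, 1 ≤ m →
      v m = (((m + 5).choose 6 : ℚ) - 6 * ((m + 3).choose 6 : ℚ)
              + 8 * ((m + 2).choose 6 : ℚ) - 3 * ((m + 1).choose 6 : ℚ)) • v 1
          + ((m + 3).choose 5 : ℚ) • w₂ - ((m + 2).choose 5 : ℚ) • w₃
          + ((m + 1).choose 5 : ℚ) • w₄) :
    ∀ m : ℕ, 1 ≤ m →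
      v m = (-7 * ((m + 3).choose 5 : ℚ) + 20 * ((m + 2).choose 5 : ℚ)
              - 23 * ((m + 1).choose 5 : ℚ) - 6 * ((m + 3).choose 6 : ℚ)
              + 8 * ((m + 2).choose 6 : ℚ) - 3 * ((m + 1).choose 6 : ℚ)
              + ((m + 5).choose 6 : ℚ)) • v 1
          + (((m + 3).choose 5 : ℚ) - 6 * ((m + 2).choose 5 : ℚ)
              + 15 * ((m + 1).choose 5 : ℚ)) • v 2
          + (((m + 2).choose 5 : ℚ) - 6 * ((m + 1).choose 5 : ℚ)) • v 3
          + ((m + 1).choose 5 : ℚ) • v 4 := by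
  intro m hm
  rw [hv m hm, hv 2 (by norm_num), hv 3 (by norm_num), hv 4 (by norm_num)]
  norm_num [Nat.choose]
  module
end

section
/- Let A be a vector space over ℚ, and let v : ℕ → A and α, β ∈ A satisfy, for every natural number m ≥ 1, v m = (C(m+5, 6) − 2·C(m+3, 6) + C(m+1, 6)) • v 1 + C(m+3, 5) • α + C(m+1, 5) • β, with scalars in ℚ. Then for every m ≥ 1, v m = (((m−4)(m−2)·m·(m+1)·(7m−5))/12 : ℚ) • v 1 + (C(m+3, 5) − 21·C(m+1, 5)) • v 2 + C(m+1, 5) • v 4, where in the first coefficient m is cast to ℚ. -/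
private lemma cast_choose_one (n : ℕ) : (n.choose 1 : ℚ) = n := by
  simp

private lemma cast_choose_two' (n : ℕ) :
    (n.choose 2 : ℚ) = n * (n - 1) / 2 := by
  induction n with
  | zero => norm_num
  | succ n ih =>
      rw [Nat.choose_succ_succ]
      push_cast
      rw [ih, cast_choose_one]
      ring

private lemma cast_choose_three (n : ℕ) :
    (n.choose 3 : ℚ) = n * (n - 1) * (n - 2) / 6 := by
  induction n with
  | zero => norm_num
  | succ n ih =>
      rw [Nat.choose_succ_succ]
      push_cast
      rw [ih, cast_choose_two']
      ring

private lemma cast_choose_four (n : ℕ) :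
    (n.choose 4 : ℚ) = n * (n - 1) * (n - 2) * (n - 3) / 24 := by
  induction n with
  | zero => norm_num
  | succ n ih =>
      rw [Nat.choose_succ_succ]
      push_cast
      rw [ih, cast_choose_three]
      ring

private lemma cast_choose_five (n : ℕ) :
    (n.choose 5 : ℚ) = n * (n - 1) * (n - 2) * (n - 3) * (n - 4) / 120 := by
  induction n with
  | zero => norm_num
  | succ n ih =>
      rw [Nat.choose_succ_succ]
      push_cast
      rw [ih, cast_choose_four]
      ring

private lemma cast_choose_six (n : ℕ) :
    (n.choose 6 : ℚ) = n * (n - 1) * (n - 2) * (n - 3) * (n - 4) * (n - 5) / 720 := by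
  induction n with
  | zero => norm_num
  | succ n ih =>
      rw [Nat.choose_succ_succ]
      push_cast
      rw [ih, cast_choose_five]
      ring

/-- Proposition (AnotherRE): intersection of two quadrics in `P⁵`, Chern class identity. -/
theorem stmt_11 {A : Type*} [AddCommGroup A] [Module ℚ A]
    (v : ℕ → A) (α β : A)
    (hv : ∀ m : ℕ, 1 ≤ m →
      v m = (((m + 5).choose 6 : ℚ) - 2 * ((m + 3).choose 6 : ℚ)
              + ((m + 1).choose 6 : ℚ)) • v 1
          + ((m + 3).choose 5 : ℚ) • α + ((m + 1).choose 5 : ℚ) • β) :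
    ∀ m : ℕ, 1 ≤ m →
      v m = ((((m : ℚ) - 4) * ((m : ℚ) - 2) * (m : ℚ) * ((m : ℚ) + 1)
              * (7 * (m : ℚ) - 5)) / 12) • v 1
          + (((m + 3).choose 5 : ℚ) - 21 * ((m + 1).choose 5 : ℚ)) • v 2
          + ((m + 1).choose 5 : ℚ) • v 4 := by
  intro m hm
  have h2 := hv 2 (by norm_num)
  have h4 := hv 4 (by norm_num)
  have hmm := hv m hm
  norm_num [Nat.choose] at h2 h4
  rw [hmm, h2, h4, cast_choose_six, cast_choose_six, cast_choose_six,
    cast_choose_five, cast_choose_five]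
  push_cast
  match_scalars <;> ring
end
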